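/- Let h, g be holomorphic on the unit disk D with h' nowhere zero, ω = g'/h' satisfying |ω| < 1 and ω = q² for some holomorphic q on D. Then the Gauss curvature K = −|ω'|²/(|h' g'|(1+|ω|)⁴) satisfies |K(z)| ≤ 4/((1 − |z|²)²·(|h'(z)| + |g'(z)|)²) for all z ∈ D. -/

import Mathlib

/-!
Write `ω = q²`. Then `‖g'‖ = ‖q‖² ‖h'‖` and `‖ω'‖ = 2 ‖q‖ ‖q'‖`, so after cancelling `‖q‖²` one gets
`|K| ≤ 4 ‖q'‖² / (‖h'‖² (1 + ‖q‖²)⁴)`, while the right-hand side equals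
`4 / ((1 - ‖z‖²)² ‖h'‖² (1 + ‖q‖²)²)`. Since `‖ω‖ < 1`, `q` maps the disk into itself, and the
Schwarz–Pick lemma `‖q'‖ (1 - ‖z‖²) ≤ 1 - ‖q‖² ≤ 1 + ‖q‖²` closes the gap.
-/

open Complex Set Metric ComplexConjugate

noncomputable def blaschkeFactor (b w : ℂ) : ℂ := (w - b) / (1 - conj b * w)

lemma normSq_one_sub_conj_mul_sub_normSq_sub (b w : ℂ) :
    normSq (1 - conj b * w) - normSq (w - b) = (1 - normSq b) * (1 - normSq w) := by
  simp only [normSq_apply, sub_re, sub_im, mul_re, mul_im, one_re, one_im, conj_re, conj_im]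
  ring

lemma norm_sub_lt_norm_one_sub_conj_mul {b w : ℂ} (hb : ‖b‖ < 1) (hw : ‖w‖ < 1) :
    ‖w - b‖ < ‖1 - conj b * w‖ := by
  have hb' : normSq b < 1 := by simpa [← Complex.sq_norm] using hb
  have hw' : normSq w < 1 := by simpa [← Complex.sq_norm] using hw
  have := normSq_one_sub_conj_mul_sub_normSq_sub b w
  rw [← sq_lt_sq₀ (norm_nonneg _) (norm_nonneg _), Complex.sq_norm, Complex.sq_norm]
  nlinarith [mul_pos (sub_pos.2 hb') (sub_pos.2 hw')]

lemma one_sub_conj_mul_ne_zero {b w : ℂ} (hb : ‖b‖ < 1) (hw : ‖w‖ < 1) :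
    1 - conj b * w ≠ 0 :=
  norm_pos_iff.1 ((norm_nonneg _).trans_lt (norm_sub_lt_norm_one_sub_conj_mul hb hw))

lemma blaschkeFactor_self (b : ℂ) : blaschkeFactor b b = 0 := by
  simp [blaschkeFactor]

lemma blaschkeFactor_neg_zero (a : ℂ) : blaschkeFactor (-a) 0 = a := by
  simp [blaschkeFactor]

lemma mapsTo_blaschkeFactor {b : ℂ} (hb : ‖b‖ < 1) :
    MapsTo (blaschkeFactor b) (ball 0 1) (ball 0 1) := by
  intro w hw
  rw [mem_ball_zero_iff] at hw ⊢
  have := norm_sub_lt_norm_one_sub_conj_mul hb hw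
  rwa [blaschkeFactor, norm_div, div_lt_one ((norm_nonneg _).trans_lt this)]

lemma hasDerivAt_blaschkeFactor {b w : ℂ} (hw : 1 - conj b * w ≠ 0) :
    HasDerivAt (blaschkeFactor b) ((1 - ‖b‖ ^ 2 : ℝ) / (1 - conj b * w) ^ 2) w := by
  have hnum : HasDerivAt (fun w : ℂ => w - b) 1 w := (hasDerivAt_id w).sub_const b
  have hden : HasDerivAt (fun w : ℂ => 1 - conj b * w) (-conj b) w := by
    simpa using ((hasDerivAt_id w).const_mul (conj b)).const_sub 1
  refine (hnum.div hden hw).congr_deriv ?_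
  push_cast
  rw [← conj_mul']
  ring

lemma differentiableOn_blaschkeFactor {b : ℂ} (hb : ‖b‖ < 1) :
    DifferentiableOn ℂ (blaschkeFactor b) (ball 0 1) := fun _ hw =>
  (hasDerivAt_blaschkeFactor (one_sub_conj_mul_ne_zero hb (mem_ball_zero_iff.1 hw)))
    |>.differentiableAt.differentiableWithinAt

lemma hasDerivAt_blaschkeFactor_self {b : ℂ} (hb : ‖b‖ < 1) :
    HasDerivAt (blaschkeFactor b) ((1 - ‖b‖ ^ 2 : ℝ)⁻¹ : ℝ) b := by
  have hne := one_sub_conj_mul_ne_zero hb hb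
  convert hasDerivAt_blaschkeFactor hne using 1
  rw [conj_mul'] at hne ⊢
  push_cast
  field_simp

lemma hasDerivAt_blaschkeFactor_neg_zero (a : ℂ) :
    HasDerivAt (blaschkeFactor (-a)) (1 - ‖a‖ ^ 2 : ℝ) 0 := by
  simpa using hasDerivAt_blaschkeFactor (b := -a) (w := 0) (by simp)

theorem schwarz_pick {f : ℂ → ℂ} (hd : DifferentiableOn ℂ f (ball 0 1))
    (hf : MapsTo f (ball 0 1) (ball 0 1)) {a : ℂ} (ha : a ∈ ball (0 : ℂ) 1) :
    ‖deriv f a‖ * (1 - ‖a‖ ^ 2) ≤ 1 - ‖f a‖ ^ 2 := by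
  have ha' : ‖-a‖ < 1 := by simpa using ha
  have hb : ‖f a‖ < 1 := mem_ball_zero_iff.1 (hf ha)
  -- Conjugating by disk automorphisms moves `a ↦ f a` to `0 ↦ 0`, where the Schwarz lemma applies.
  set F := blaschkeFactor (f a) ∘ f ∘ blaschkeFactor (-a)
  have hF_maps : MapsTo F (ball 0 1) (ball 0 1) :=
    (mapsTo_blaschkeFactor hb).comp (hf.comp (mapsTo_blaschkeFactor ha'))
  have hF_diff : DifferentiableOn ℂ F (ball 0 1) :=
    (differentiableOn_blaschkeFactor hb).comp
      (hd.comp (differentiableOn_blaschkeFactor ha') (mapsTo_blaschkeFactor ha'))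
      (hf.comp (mapsTo_blaschkeFactor ha'))
  have hF0 : F 0 = 0 := by simp [F, blaschkeFactor_neg_zero, blaschkeFactor_self]
  have hF' : HasDerivAt F
      (((1 - ‖f a‖ ^ 2 : ℝ)⁻¹ : ℝ) * (deriv f a * (1 - ‖a‖ ^ 2 : ℝ))) 0 := by
    have hfa : HasDerivAt f (deriv f a) (blaschkeFactor (-a) 0) := by
      rw [blaschkeFactor_neg_zero]
      exact (hd.differentiableAt (isOpen_ball.mem_nhds ha)).hasDerivAt
    exact (hasDerivAt_blaschkeFactor_self hb).comp_of_eq 0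
      (hfa.comp 0 (hasDerivAt_blaschkeFactor_neg_zero a)) (by simp [blaschkeFactor_neg_zero])
  have hSchwarz := norm_deriv_le_one_of_mapsTo_ball hF_diff
    (by rw [hF0]; exact hF_maps.mono_right ball_subset_closedBall) one_pos
  have hb2 : 0 < 1 - ‖f a‖ ^ 2 := by nlinarith [norm_nonneg (f a)]
  have ha2 : 0 ≤ 1 - ‖a‖ ^ 2 := by nlinarith [norm_nonneg a, mem_ball_zero_iff.1 ha]
  rw [hF'.deriv, norm_mul, norm_mul, norm_real, norm_real, Real.norm_of_nonneg (inv_pos.2 hb2).le,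
    Real.norm_of_nonneg ha2, inv_mul_le_iff₀ hb2, mul_one] at hSchwarz
  exact hSchwarz

/-- The curvature estimate in the variables `a = ‖h'‖`, `s = ‖q‖`, `t = ‖q'‖`, `r = 1 - ‖z‖²`. -/
lemma abs_curvature_le {a s t r : ℝ} (ha : 0 < a) (hs : 0 ≤ s) (ht : 0 ≤ t) (hr : 0 < r)
    (hPick : t * r ≤ 1 - s ^ 2) :
    |-(2 * s * t) ^ 2 / (a * (s ^ 2 * a) * (1 + s ^ 2) ^ 4)|
      ≤ 4 / (r ^ 2 * (a + s ^ 2 * a) ^ 2) := by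
  have hcancel : |-(2 * s * t) ^ 2 / (a * (s ^ 2 * a) * (1 + s ^ 2) ^ 4)|
      ≤ 4 * t ^ 2 / (a ^ 2 * (1 + s ^ 2) ^ 4) := by
    rcases hs.eq_or_lt with rfl | hs
    · calc _ = (0 : ℝ) := by simp
        _ ≤ _ := by positivity
    rw [abs_div, abs_neg, abs_of_nonneg (by positivity), abs_of_pos (by positivity)]
    exact le_of_eq (by field_simp; ring)
  have htr : (t * r) ^ 2 ≤ (1 + s ^ 2) ^ 2 :=
    pow_le_pow_left₀ (by positivity) (hPick.trans (by nlinarith)) 2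
  refine hcancel.trans ?_
  rw [div_le_div_iff₀ (by positivity) (by positivity)]
  nlinarith [mul_pos ha ha, pow_pos (by positivity : 0 < 1 + s ^ 2) 2]

theorem curvature_bound_disk_general
    (D : Set ℂ) (hD : D = Metric.ball (0 : ℂ) 1)
    (h g q : ℂ → ℂ) (ω : ℂ → ℂ)
    (hh0 : ∀ z ∈ D, deriv h z ≠ 0)
    (hω : ∀ z ∈ D, ω z = deriv g z / deriv h z)
    (hω1 : ∀ z ∈ D, ‖ω z‖ < 1)
    (hqdiff : DifferentiableOn ℂ q D)
    (hqsq : ∀ z ∈ D, q z ^ 2 = ω z)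
    (K : ℂ → ℝ)
    (hK : ∀ z ∈ D, K z = -(‖deriv ω z‖ ^ 2) /
      (‖deriv h z * deriv g z‖ * (1 + ‖ω z‖) ^ 4)) :
    ∀ z ∈ D, |K z| ≤ 4 / ((1 - ‖z‖ ^ 2) ^ 2 * (‖deriv h z‖ + ‖deriv g z‖) ^ 2) := by
  subst hD
  intro z hz
  have hωq : ∀ w ∈ ball (0 : ℂ) 1, ‖ω w‖ = ‖q w‖ ^ 2 := fun w hw => by
    rw [← hqsq w hw, norm_pow]
  have hq_maps : MapsTo q (ball 0 1) (ball 0 1) := fun w hw => by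
    rw [mem_ball_zero_iff, ← sq_lt_one_iff₀ (norm_nonneg _), ← hωq w hw]
    exact hω1 w hw
  have hg' : ‖deriv g z‖ = ‖q z‖ ^ 2 * ‖deriv h z‖ := by
    rw [← hωq z hz, ← norm_mul, hω z hz, div_mul_cancel₀ _ (hh0 z hz)]
  have hω' : ‖deriv ω z‖ = 2 * ‖q z‖ * ‖deriv q z‖ := by
    have hq : HasDerivAt q (deriv q z) z :=
      (hqdiff.differentiableAt (isOpen_ball.mem_nhds hz)).hasDerivAt
    have hsq : (fun w => q w ^ 2) =ᶠ[nhds z] ω :=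
      Filter.eventually_of_mem (isOpen_ball.mem_nhds hz) hqsq
    rw [← hsq.deriv_eq, (hq.fun_pow 2).deriv]
    simp
  have hz' : 0 < 1 - ‖z‖ ^ 2 := by nlinarith [norm_nonneg z, mem_ball_zero_iff.1 hz]
  rw [hK z hz, hω', norm_mul, hg', hωq z hz]
  exact abs_curvature_le (norm_pos_iff.2 (hh0 z hz)) (norm_nonneg _) (norm_nonneg _) hz'
    (schwarz_pick hqdiff hq_maps hz)

/-- Curvature bound on the unit disk: with `ω = g'/h'`, `|ω| < 1`, `ω = q²`,
the Gauss curvature `K = −|ω'|²/(|h'g'|(1+|ω|)⁴)` satisfies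
`|K(z)| ≤ 4/((1−|z|²)²(|h'(z)|+|g'(z)|)²)`. -/
theorem curvature_bound_disk
    (D : Set ℂ) (hD : D = Metric.ball (0 : ℂ) 1)
    (h g q : ℂ → ℂ) (ω : ℂ → ℂ)
    (hh : DifferentiableOn ℂ h D) (hg : DifferentiableOn ℂ g D)
    (hh0 : ∀ z ∈ D, deriv h z ≠ 0)
    (hω : ∀ z ∈ D, ω z = deriv g z / deriv h z)
    (hω1 : ∀ z ∈ D, ‖ω z‖ < 1)
    (hqdiff : DifferentiableOn ℂ q D)
    (hqsq : ∀ z ∈ D, q z ^ 2 = ω z)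
    (K : ℂ → ℝ)
    (hK : ∀ z ∈ D, K z = -(‖deriv ω z‖ ^ 2) /
      (‖deriv h z * deriv g z‖ * (1 + ‖ω z‖) ^ 4)) :
    ∀ z ∈ D, |K z| ≤ 4 / ((1 - ‖z‖ ^ 2) ^ 2 * (‖deriv h z‖ + ‖deriv g z‖) ^ 2) :=
  curvature_bound_disk_general D hD h g q ω hh0 hω hω1 hqdiff hqsq K hK
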